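/- arXiv:2005.09838 — 2 statements merged into one kernel-verified Lean document; each statement's English description precedes it below -/
import Mathlib

section
/- Let m1, m2, m3, r be positive integers, let ρ1, ρ2, μ be real numbers, let H be a real (m1−1)×m1 matrix and K a real (m2−1)×m2 matrix. Let X_1,…,X_{m3} ∈ ℝ^{m1×r}, Y_1,…,Y_{m3} ∈ ℝ^{r×m2}, W_1,…,W_{m3} ∈ ℝ^{m1×m2}, and set Z_k = Σ_{l=1}^{m3} X_{((k−l) mod m3)+1} Y_l. Then ½ Σ_{k=1}^{m3} ‖Z_k − W_k‖_F² + (μ/2) Σ_{k=1}^{m3} ‖W_k‖_F² + (ρ1/2) Σ_{k=1}^{m3} ‖H Z_k‖_F² + (ρ2/2) Σ_{k=1}^{m3} ‖W_k Kᵀ‖_F² = (1/(2m3)) Σ_{k=1}^{m3} { ‖X̃_k Ỹ_k − W̃_k‖_F² + ρ1 ‖H X̃_k Ỹ_k‖_F² + ρ2 ‖W̃_k Kᵀ‖_F² + μ ‖W̃_k‖_F² }, where X̃_k, Ỹ_k, W̃_k are the DFT slices of (X_k), (Y_k), (W_k). -/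
open Matrix Complex BigOperators

noncomputable section

/-- The DFT slices `Ã_k = Σ_l ω^{(k-1)(l-1)} A_l` (zero-based indexing). -/
def dftSlices (m3 : ℕ) {m1 m2 : ℕ} (A : Fin m3 → Matrix (Fin m1) (Fin m2) ℂ) :
    Fin m3 → Matrix (Fin m1) (Fin m2) ℂ :=
  fun k => ∑ l : Fin m3,
    Complex.exp (2 * Real.pi * Complex.I / m3) ^ ((k : ℕ) * (l : ℕ)) • A l

/-- The DFT slices of a family of real matrices. -/
def dftSlicesR (m3 : ℕ) {m1 m2 : ℕ} (A : Fin m3 → Matrix (Fin m1) (Fin m2) ℝ) :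
    Fin m3 → Matrix (Fin m1) (Fin m2) ℂ :=
  dftSlices m3 (fun l => (A l).map (Complex.ofReal))

/-- Squared Frobenius norm of a complex matrix. -/
def frobSqC {a b : ℕ} (M : Matrix (Fin a) (Fin b) ℂ) : ℝ :=
  ∑ i, ∑ j, ‖M i j‖ ^ 2

/-- Squared Frobenius norm of a real matrix. -/
def frobSqR {a b : ℕ} (M : Matrix (Fin a) (Fin b) ℝ) : ℝ :=
  ∑ i, ∑ j, (M i j) ^ 2

/-- The t-product slices `Z_k = Σ_l X_{(k-l) mod m3} Y_l`. -/
def tprodSlices {m1 r m2 m3 : ℕ} (X : Fin m3 → Matrix (Fin m1) (Fin r) ℝ)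
    (Y : Fin m3 → Matrix (Fin r) (Fin m2) ℝ) : Fin m3 → Matrix (Fin m1) (Fin m2) ℝ :=
  fun k => ∑ l : Fin m3, X (k - l) * Y l

/-!
Along the third mode the DFT matrix `F = (ω^{kl})` satisfies `Fᴴ F = m₃ I`, since `ω` is a
primitive `m₃`-th root of unity; hence applying it tube-wise multiplies every sum of squared
Frobenius norms by `m₃` (Parseval). It also commutes with constant left and right factors such as
`H` and `Kᵀ`, and turns the cyclic convolution defining the t-product into the slice-wise product
`X̃ₖ Ỹₖ`. So each of the four terms of the objective transforms separately.
-/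

def dftMatrix (ζ : ℂ) (m : ℕ) : Matrix (Fin m) (Fin m) ℂ :=
  of fun k l => ζ ^ ((k : ℕ) * l)

theorem IsPrimitiveRoot.conjTranspose_dftMatrix_mul_self {ζ : ℂ} {m : ℕ}
    (hζ : IsPrimitiveRoot ζ m) : (dftMatrix ζ m)ᴴ * dftMatrix ζ m = (m : ℂ) • 1 := by
  ext l l'
  have hconj : star ζ = ζ⁻¹ := (Complex.inv_eq_conj (hζ.norm'_eq_one l.pos.ne')).symm
  set z := ζ⁻¹ ^ (l : ℕ) * ζ ^ (l' : ℕ) with hz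
  have hterm : ∀ k : Fin m, star (ζ ^ ((k : ℕ) * l)) * ζ ^ ((k : ℕ) * l') = z ^ (k : ℕ) := by
    intro k
    rw [star_pow, hconj, mul_pow, ← pow_mul, ← pow_mul, mul_comm (l : ℕ), mul_comm (l' : ℕ)]
  have hz_eq_one : z = 1 ↔ l = l' := by
    rw [hz, inv_pow, inv_mul_eq_one₀ (pow_ne_zero _ (hζ.ne_zero l.pos.ne')), Fin.ext_iff]
    exact ⟨hζ.pow_inj l.isLt l'.isLt, fun h => h ▸ rfl⟩
  simp only [mul_apply, conjTranspose_apply, dftMatrix, of_apply, hterm, Matrix.smul_apply,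
    Fin.sum_univ_eq_sum_range (z ^ ·)]
  by_cases h : l = l'
  · simp [hz_eq_one.2 h, h, one_apply]
  · have hzm : z ^ m = 1 := by
      rw [hz, mul_pow, ← pow_mul, ← pow_mul, pow_mul', pow_mul', inv_pow, hζ.pow_eq_one]
      simp
    rw [geom_sum_eq (mt hz_eq_one.1 h), hzm]
    simp [h]

theorem IsPrimitiveRoot.sum_norm_sq_dftMatrix_mulVec {ζ : ℂ} {m : ℕ}
    (hζ : IsPrimitiveRoot ζ m) (a : Fin m → ℂ) :
    ∑ k, ‖(dftMatrix ζ m *ᵥ a) k‖ ^ 2 = m * ∑ l, ‖a l‖ ^ 2 := by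
  have hnorm : ∀ v : Fin m → ℂ, ((∑ k, ‖v k‖ ^ 2 : ℝ) : ℂ) = star v ⬝ᵥ v := by
    intro v
    simp [dotProduct, Complex.conj_mul']
  apply Complex.ofReal_injective
  rw [Complex.ofReal_mul, hnorm, hnorm, star_mulVec, dotProduct_mulVec, vecMul_vecMul,
    hζ.conjTranspose_dftMatrix_mul_self, vecMul_smul, vecMul_one, smul_dotProduct, smul_eq_mul,
    Complex.ofReal_natCast]

theorem dftSlices_apply_apply (m : ℕ) {a b : ℕ} (A : Fin m → Matrix (Fin a) (Fin b) ℂ)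
    (k : Fin m) (i : Fin a) (j : Fin b) :
    dftSlices m A k i j =
      (dftMatrix (exp (2 * Real.pi * I / m)) m *ᵥ fun l => A l i j) k := by
  simp [dftSlices, dftMatrix, mulVec, dotProduct, Matrix.sum_apply]

theorem frobSqC_eq_sum_prod {a b : ℕ} (M : Matrix (Fin a) (Fin b) ℂ) :
    frobSqC M = ∑ p : Fin a × Fin b, ‖M p.1 p.2‖ ^ 2 :=
  (Fintype.sum_prod_type fun p => ‖M p.1 p.2‖ ^ 2).symm

theorem sum_frobSqC_dftSlices (m : ℕ) [NeZero m] {a b : ℕ}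
    (A : Fin m → Matrix (Fin a) (Fin b) ℂ) :
    ∑ k, frobSqC (dftSlices m A k) = m * ∑ k, frobSqC (A k) := by
  have hζ := isPrimitiveRoot_exp m (NeZero.ne m)
  calc ∑ k, frobSqC (dftSlices m A k)
      = ∑ p : Fin a × Fin b,
          ∑ k, ‖(dftMatrix (exp (2 * Real.pi * I / m)) m *ᵥ fun l => A l p.1 p.2) k‖ ^ 2 := by
        simp only [frobSqC_eq_sum_prod, dftSlices_apply_apply]
        exact Finset.sum_comm
    _ = ∑ p : Fin a × Fin b, m * ∑ l, ‖A l p.1 p.2‖ ^ 2 := by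
        simp only [hζ.sum_norm_sq_dftMatrix_mulVec]
    _ = m * ∑ k, frobSqC (A k) := by
        simp only [frobSqC_eq_sum_prod, ← Finset.mul_sum]
        exact congrArg _ Finset.sum_comm

theorem frobSqC_map_ofReal {a b : ℕ} (A : Matrix (Fin a) (Fin b) ℝ) :
    frobSqC (A.map ofReal) = frobSqR A := by
  simp [frobSqC, frobSqR]

theorem sum_frobSqC_dftSlicesR (m : ℕ) [NeZero m] {a b : ℕ}
    (A : Fin m → Matrix (Fin a) (Fin b) ℝ) :
    ∑ k, frobSqC (dftSlicesR m A k) = m * ∑ k, frobSqR (A k) := by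
  simp only [dftSlicesR, sum_frobSqC_dftSlices, frobSqC_map_ofReal]

theorem pow_mul_val_add {M : Type*} [CommMonoid M] {ζ : M} {m : ℕ} [NeZero m] (hζ : ζ ^ m = 1)
    (k q l : Fin m) : ζ ^ ((k : ℕ) * (q + l : Fin m)) = ζ ^ ((k : ℕ) * q) * ζ ^ ((k : ℕ) * l) := by
  have hζk : (ζ ^ (k : ℕ)) ^ m = 1 := by rw [pow_right_comm, hζ, one_pow]
  rw [pow_mul, Fin.val_add, ← pow_eq_pow_mod _ hζk, pow_add, ← pow_mul, ← pow_mul]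

theorem dftSlices_cyclicConv (m : ℕ) [NeZero m] {a b c : ℕ}
    (A : Fin m → Matrix (Fin a) (Fin b) ℂ) (B : Fin m → Matrix (Fin b) (Fin c) ℂ) (k : Fin m) :
    dftSlices m (fun p => ∑ l, A (p - l) * B l) k = dftSlices m A k * dftSlices m B k := by
  have hζ := (isPrimitiveRoot_exp m (NeZero.ne m)).pow_eq_one
  simp only [dftSlices, Finset.smul_sum, Matrix.sum_mul, Matrix.mul_sum, Matrix.smul_mul,
    Matrix.mul_smul, smul_smul]
  rw [Finset.sum_comm]
  refine Finset.sum_congr rfl fun l _ => Fintype.sum_equiv (Equiv.subRight l) _ _ fun p => ?_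
  rw [Equiv.subRight_apply, ← pow_mul_val_add hζ, add_sub_cancel]

theorem dftSlices_sub (m : ℕ) {a b : ℕ} (A B : Fin m → Matrix (Fin a) (Fin b) ℂ) (k : Fin m) :
    dftSlices m (fun l => A l - B l) k = dftSlices m A k - dftSlices m B k := by
  simp only [dftSlices, smul_sub, Finset.sum_sub_distrib]

theorem dftSlices_mul_left (m : ℕ) {p a b : ℕ} (H : Matrix (Fin p) (Fin a) ℂ)
    (A : Fin m → Matrix (Fin a) (Fin b) ℂ) (k : Fin m) :
    dftSlices m (fun l => H * A l) k = H * dftSlices m A k := by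
  simp only [dftSlices, Matrix.mul_sum, Matrix.mul_smul]

theorem dftSlices_mul_right (m : ℕ) {a b p : ℕ} (K : Matrix (Fin b) (Fin p) ℂ)
    (A : Fin m → Matrix (Fin a) (Fin b) ℂ) (k : Fin m) :
    dftSlices m (fun l => A l * K) k = dftSlices m A k * K := by
  simp only [dftSlices, Matrix.sum_mul, Matrix.smul_mul]

theorem map_ofReal_mul {l m n : Type*} [Fintype m] (M : Matrix l m ℝ) (N : Matrix m n ℝ) :
    (M * N).map ofReal = M.map ofReal * N.map ofReal :=
  Matrix.map_mul (f := ofRealHom)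

theorem dftSlicesR_sub (m : ℕ) {a b : ℕ} (A B : Fin m → Matrix (Fin a) (Fin b) ℝ) (k : Fin m) :
    dftSlicesR m (fun l => A l - B l) k = dftSlicesR m A k - dftSlicesR m B k := by
  simp only [dftSlicesR, Matrix.map_sub _ ofReal_sub, dftSlices_sub]

theorem dftSlicesR_mul_left (m : ℕ) {p a b : ℕ} (H : Matrix (Fin p) (Fin a) ℝ)
    (A : Fin m → Matrix (Fin a) (Fin b) ℝ) (k : Fin m) :
    dftSlicesR m (fun l => H * A l) k = H.map ofReal * dftSlicesR m A k := by
  simp only [dftSlicesR, map_ofReal_mul, dftSlices_mul_left]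

theorem dftSlicesR_mul_right (m : ℕ) {a b p : ℕ} (K : Matrix (Fin b) (Fin p) ℝ)
    (A : Fin m → Matrix (Fin a) (Fin b) ℝ) (k : Fin m) :
    dftSlicesR m (fun l => A l * K) k = dftSlicesR m A k * K.map ofReal := by
  simp only [dftSlicesR, map_ofReal_mul, dftSlices_mul_right]

theorem dftSlicesR_tprodSlices (m : ℕ) [NeZero m] {a b c : ℕ}
    (X : Fin m → Matrix (Fin a) (Fin b) ℝ) (Y : Fin m → Matrix (Fin b) (Fin c) ℝ) (k : Fin m) :
    dftSlicesR m (tprodSlices X Y) k = dftSlicesR m X k * dftSlicesR m Y k := by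
  have hmap : ∀ p, (tprodSlices X Y p).map ofReal =
      ∑ l, (X (p - l)).map ofReal * (Y l).map ofReal := by
    intro p
    ext i j
    simp [tprodSlices, Matrix.sum_apply, mul_apply]
  simp only [dftSlicesR, hmap]
  exact dftSlices_cyclicConv m (fun l => (X l).map ofReal) (fun l => (Y l).map ofReal) k

theorem objective_dft_separation_general (m1 m2 m3 r : ℕ)
    (hm3 : 0 < m3)
    (ρ1 ρ2 μ : ℝ)
    (H : Matrix (Fin (m1 - 1)) (Fin m1) ℝ)
    (K : Matrix (Fin (m2 - 1)) (Fin m2) ℝ)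
    (X : Fin m3 → Matrix (Fin m1) (Fin r) ℝ)
    (Y : Fin m3 → Matrix (Fin r) (Fin m2) ℝ)
    (W : Fin m3 → Matrix (Fin m1) (Fin m2) ℝ) :
    (1 / 2) * (∑ k : Fin m3, frobSqR (tprodSlices X Y k - W k)) +
        (μ / 2) * (∑ k : Fin m3, frobSqR (W k)) +
        (ρ1 / 2) * (∑ k : Fin m3, frobSqR (H * tprodSlices X Y k)) +
        (ρ2 / 2) * (∑ k : Fin m3, frobSqR (W k * Kᵀ)) =
      (1 / (2 * (m3 : ℝ))) *
        ∑ k : Fin m3,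
          (frobSqC (dftSlicesR m3 X k * dftSlicesR m3 Y k - dftSlicesR m3 W k) +
            ρ1 * frobSqC (H.map (Complex.ofReal) * (dftSlicesR m3 X k * dftSlicesR m3 Y k)) +
            ρ2 * frobSqC (dftSlicesR m3 W k * (Kᵀ).map (Complex.ofReal)) +
            μ * frobSqC (dftSlicesR m3 W k)) := by
  have : NeZero m3 := ⟨hm3.ne'⟩
  simp only [← dftSlicesR_tprodSlices, ← dftSlicesR_sub, ← dftSlicesR_mul_left,
    ← dftSlicesR_mul_right, Finset.sum_add_distrib, ← Finset.mul_sum, sum_frobSqC_dftSlicesR]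
  field_simp
  ring

/-- the regularized objective equals its separable DFT-domain form. -/
theorem objective_dft_separation (m1 m2 m3 r : ℕ)
    (hm1 : 0 < m1) (hm2 : 0 < m2) (hm3 : 0 < m3) (hr : 0 < r)
    (ρ1 ρ2 μ : ℝ)
    (H : Matrix (Fin (m1 - 1)) (Fin m1) ℝ)
    (K : Matrix (Fin (m2 - 1)) (Fin m2) ℝ)
    (X : Fin m3 → Matrix (Fin m1) (Fin r) ℝ)
    (Y : Fin m3 → Matrix (Fin r) (Fin m2) ℝ)
    (W : Fin m3 → Matrix (Fin m1) (Fin m2) ℝ) :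
    (1 / 2) * (∑ k : Fin m3, frobSqR (tprodSlices X Y k - W k)) +
        (μ / 2) * (∑ k : Fin m3, frobSqR (W k)) +
        (ρ1 / 2) * (∑ k : Fin m3, frobSqR (H * tprodSlices X Y k)) +
        (ρ2 / 2) * (∑ k : Fin m3, frobSqR (W k * Kᵀ)) =
      (1 / (2 * (m3 : ℝ))) *
        ∑ k : Fin m3,
          (frobSqC (dftSlicesR m3 X k * dftSlicesR m3 Y k - dftSlicesR m3 W k) +
            ρ1 * frobSqC (H.map (Complex.ofReal) * (dftSlicesR m3 X k * dftSlicesR m3 Y k)) +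
            ρ2 * frobSqC (dftSlicesR m3 W k * (Kᵀ).map (Complex.ofReal)) +
            μ * frobSqC (dftSlicesR m3 W k)) :=
  objective_dft_separation_general m1 m2 m3 r hm3 ρ1 ρ2 μ H K X Y W
end
end

section
/- Let m1, m2, r, s be positive integers with m1 ≥ 2, let ρ1 ≥ 0, let H be the real (m1−1)×m1 Toeplitz matrix with ones on the diagonal and minus ones on the first superdiagonal, H_{ρ1} = I_{m1} + ρ1 Hᵀ H, and W ∈ ℂ^{m1×m2}. Let X ∈ ℂ^{m1×r} and Y ∈ ℂ^{r×m2}, and suppose X = U S V* is a singular value decomposition with U, V unitary, positive singular values σ_1 ≥ … ≥ σ_s > 0, and V_1 the first s columns of V. Let G = X*(XY − W) + ρ1 X* Hᵀ H X Y, let Q satisfy the four Penrose equations for X* H_{ρ1} X, and set d = −Q G. Then ‖d‖_F² ≤ (1/σ_s⁴) · ‖V_1* G‖_F². -/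
open Matrix Complex BigOperators

noncomputable section

/-- The `(m-1) × m` finite-difference Toeplitz matrix `Toeplitz(0,1,-1)`. -/
def toeplitzD (m : ℕ) : Matrix (Fin (m - 1)) (Fin m) ℝ :=
  Matrix.of fun i j =>
    if (j : ℕ) = (i : ℕ) then 1 else if (j : ℕ) = (i : ℕ) + 1 then -1 else 0

/-- `HᵀH` as a complex matrix, for `H` the Toeplitz matrix. -/
def HtH (m : ℕ) : Matrix (Fin m) (Fin m) ℂ :=
  ((toeplitzD m)ᵀ * toeplitzD m).map (Complex.ofReal)

/-!
Write `u = Q G`. The Penrose equations put `u` in the range of `M = X* (I + ρ HᵀH) X`, hence in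
the range of `X*` and so of `V₁`; thus `‖V₁* u‖ = ‖u‖`, and they also give
`⟨u, M u⟩ = ⟨u, G⟩ = ⟨V₁* u, V₁* G⟩`. Since `I + ρ HᵀH ≥ I`,
`Re ⟨u, M u⟩ ≥ ‖X u‖² ≥ σ_s² ‖V₁* u‖² = σ_s² ‖u‖²`, while Cauchy–Schwarz bounds it by
`‖u‖ ‖V₁* G‖`. Hence `σ_s² ‖u‖ ≤ ‖V₁* G‖`.
-/

open scoped InnerProductSpace

namespace Matrix

variable {𝕜 : Type*} [RCLike 𝕜] {l m n k r : Type*}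

def frobeniusVec (A : Matrix m n 𝕜) : EuclideanSpace 𝕜 (n × m) :=
  WithLp.toLp 2 A.vec

@[simp]
theorem frobeniusVec_add (A B : Matrix m n 𝕜) :
    (A + B).frobeniusVec = A.frobeniusVec + B.frobeniusVec :=
  rfl

@[simp]
theorem frobeniusVec_smul (c : 𝕜) (A : Matrix m n 𝕜) :
    (c • A).frobeniusVec = c • A.frobeniusVec :=
  rfl

@[simp]
theorem frobeniusVec_neg (A : Matrix m n 𝕜) : (-A).frobeniusVec = -A.frobeniusVec :=
  rfl

theorem inner_frobeniusVec [Fintype m] [Fintype n] (A B : Matrix m n 𝕜) :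
    ⟪A.frobeniusVec, B.frobeniusVec⟫_𝕜 = (Aᴴ * B).trace := by
  rw [frobeniusVec, frobeniusVec, EuclideanSpace.inner_toLp_toLp, dotProduct_comm,
    star_vec_dotProduct_vec]

theorem inner_frobeniusVec_mul_left [Fintype l] [Fintype m] [Fintype n]
    (C : Matrix l m 𝕜) (A : Matrix m n 𝕜) (B : Matrix l n 𝕜) :
    ⟪(C * A).frobeniusVec, B.frobeniusVec⟫_𝕜 = ⟪A.frobeniusVec, (Cᴴ * B).frobeniusVec⟫_𝕜 := by
  simp only [inner_frobeniusVec, conjTranspose_mul, Matrix.mul_assoc]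

theorem inner_frobeniusVec_mul_right [Fintype l] [Fintype m] [Fintype n]
    (C : Matrix m l 𝕜) (A : Matrix m n 𝕜) (B : Matrix l n 𝕜) :
    ⟪A.frobeniusVec, (C * B).frobeniusVec⟫_𝕜 = ⟪(Cᴴ * A).frobeniusVec, B.frobeniusVec⟫_𝕜 := by
  rw [inner_frobeniusVec_mul_left, conjTranspose_conjTranspose]

theorem norm_frobeniusVec_sq [Fintype m] [Fintype n] (A : Matrix m n 𝕜) :
    ‖A.frobeniusVec‖ ^ 2 = ∑ i, ∑ j, ‖A i j‖ ^ 2 := by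
  rw [EuclideanSpace.norm_sq_eq, Fintype.sum_prod_type, Finset.sum_comm]
  rfl

theorem norm_frobeniusVec_mul_of_conjTranspose_mul_self_eq_one [Fintype l] [Fintype m]
    [Fintype n] [DecidableEq m] {C : Matrix l m 𝕜} (hC : Cᴴ * C = 1) (A : Matrix m n 𝕜) :
    ‖(C * A).frobeniusVec‖ = ‖A.frobeniusVec‖ := by
  rw [← sq_eq_sq₀ (norm_nonneg _) (norm_nonneg _), ← inner_self_eq_norm_sq (𝕜 := 𝕜),
    ← inner_self_eq_norm_sq (𝕜 := 𝕜), inner_frobeniusVec_mul_left, ← Matrix.mul_assoc, hC,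
    Matrix.one_mul]

theorem mul_norm_frobeniusVec_le_norm_frobeniusVec_diagonal_mul [Fintype k] [Fintype n]
    [DecidableEq k] {σ : k → ℝ} {c : ℝ} (hc : 0 ≤ c) (hσ : ∀ i, c ≤ σ i) (w : Matrix k n 𝕜) :
    c * ‖w.frobeniusVec‖ ≤ ‖(diagonal (fun i => (σ i : 𝕜)) * w).frobeniusVec‖ := by
  refine le_of_sq_le_sq ?_ (norm_nonneg _)
  rw [mul_pow, norm_frobeniusVec_sq, norm_frobeniusVec_sq, Finset.mul_sum]
  gcongr with i _
  rw [Finset.mul_sum]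
  gcongr with j _
  rw [diagonal_mul, norm_mul, mul_pow, RCLike.norm_ofReal, sq_abs]
  gcongr
  exact hσ i

theorem conjTranspose_mul_submatrix_id_eq_one [Fintype l] [DecidableEq m]
    [DecidableEq k] {V : Matrix l m 𝕜} (hV : Vᴴ * V = 1) {f : k → m}
    (hf : Function.Injective f) : (V.submatrix id f)ᴴ * V.submatrix id f = 1 := by
  rw [conjTranspose_submatrix, ← submatrix_mul _ _ _ _ _ Function.bijective_id, hV,
    submatrix_one _ hf]

def rectDiagonal {m r s : ℕ} (σ : Fin s → ℝ) : Matrix (Fin m) (Fin r) 𝕜 :=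
  of fun i j => if h : (i : ℕ) = j ∧ (i : ℕ) < s then (σ ⟨i, h.2⟩ : 𝕜) else 0

theorem rectDiagonal_eq {m r s : ℕ} (hsm : s ≤ m) (hsr : s ≤ r) (σ : Fin s → ℝ) :
    (rectDiagonal σ : Matrix (Fin m) (Fin r) 𝕜) =
      (1 : Matrix (Fin m) (Fin m) 𝕜).submatrix id (Fin.castLE hsm) *
        diagonal (fun i => (σ i : 𝕜)) *
          (1 : Matrix (Fin r) (Fin r) 𝕜).submatrix (Fin.castLE hsr) id := by
  ext i j
  rw [mul_apply]
  simp only [mul_diagonal, submatrix_apply, id, one_apply, Fin.ext_iff, Fin.val_castLE,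
    rectDiagonal, of_apply, mul_ite, mul_one, mul_zero, ite_mul, zero_mul]
  by_cases hi : (i : ℕ) < s
  · rw [Finset.sum_eq_single ⟨i, hi⟩
      (fun t _ ht => by simp [Fin.ext_iff] at ht; simp [Ne.symm ht]) (by simp)]
    by_cases hij : (i : ℕ) = j
    · simp [hij, hij ▸ hi]
    · simp [hij]
  · rw [Finset.sum_eq_zero fun t _ => by simp [show (i : ℕ) ≠ t by omega]]
    simp [hi]

theorem mul_rectDiagonal_mul_conjTranspose {m r s : ℕ} [Fintype l] (hsm : s ≤ m)
    (hsr : s ≤ r) (σ : Fin s → ℝ) (U : Matrix l (Fin m) 𝕜) (V : Matrix n (Fin r) 𝕜) :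
    U * (rectDiagonal σ : Matrix (Fin m) (Fin r) 𝕜) * Vᴴ =
      U.submatrix id (Fin.castLE hsm) * diagonal (fun i => (σ i : 𝕜)) *
        (V.submatrix id (Fin.castLE hsr))ᴴ := by
  rw [rectDiagonal_eq hsm hsr, conjTranspose_submatrix, Matrix.mul_assoc, Matrix.mul_assoc,
    Matrix.mul_assoc]
  have hU := mul_submatrix_one (Equiv.refl _) (Fin.castLE hsm) U
  have hV := one_submatrix_mul (Fin.castLE hsr) (Equiv.refl _) Vᴴ
  simp only [Equiv.coe_refl, Equiv.refl_symm, Function.id_comp] at hU hV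
  rw [hV, ← Matrix.mul_assoc, hU, Matrix.mul_assoc]

section SVD

variable [Fintype k] [DecidableEq k] (U₁ : Matrix m k 𝕜) (V₁ : Matrix r k 𝕜) (σ : k → ℝ)

theorem mul_conjTranspose_mul_conjTranspose_svd [Fintype r] (hV₁ : V₁ᴴ * V₁ = 1) :
    V₁ * V₁ᴴ * (U₁ * diagonal (fun i => (σ i : 𝕜)) * V₁ᴴ)ᴴ =
      (U₁ * diagonal (fun i => (σ i : 𝕜)) * V₁ᴴ)ᴴ := by
  simp only [conjTranspose_mul, conjTranspose_conjTranspose, Matrix.mul_assoc]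
  rw [← Matrix.mul_assoc V₁ᴴ V₁, hV₁, Matrix.one_mul]

theorem mul_norm_frobeniusVec_le_svd_mul [Fintype m] [Fintype n] [Fintype r]
    (hU₁ : U₁ᴴ * U₁ = 1) {c : ℝ} (hc : 0 ≤ c) (hσ : ∀ i, c ≤ σ i) (w : Matrix r n 𝕜) :
    c * ‖(V₁ᴴ * w).frobeniusVec‖ ≤
      ‖(U₁ * diagonal (fun i => (σ i : 𝕜)) * V₁ᴴ * w).frobeniusVec‖ := by
  rw [Matrix.mul_assoc, Matrix.mul_assoc,
    norm_frobeniusVec_mul_of_conjTranspose_mul_self_eq_one hU₁]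
  exact mul_norm_frobeniusVec_le_norm_frobeniusVec_diagonal_mul hc hσ (V₁ᴴ * w)

end SVD

section Penrose

variable [Fintype r] {M Q : Matrix r r 𝕜}

theorem moorePenrose_mul_eq (hM : Mᴴ = M) (hQMQ : Q * M * Q = Q) (hQM : (Q * M)ᴴ = Q * M)
    (G : Matrix r n 𝕜) : Q * G = M * (Qᴴ * (Q * G)) := by
  conv_lhs => rw [← hQMQ, ← hQM, conjTranspose_mul, hM]
  simp only [Matrix.mul_assoc]

theorem inner_frobeniusVec_moorePenrose_mul [Fintype n] (hM : Mᴴ = M) (hMQM : M * Q * M = M)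
    (hQMQ : Q * M * Q = Q) (hMQ : (M * Q)ᴴ = M * Q) (hQM : (Q * M)ᴴ = Q * M)
    (G : Matrix r n 𝕜) :
    ⟪(Q * G).frobeniusVec, (M * (Q * G)).frobeniusVec⟫_𝕜 =
      ⟪(Q * G).frobeniusVec, G.frobeniusVec⟫_𝕜 := by
  -- `M Q` fixes the range of `M`, which contains `Q G`.
  have hfix : M * Q * (Q * G) = Q * G := by
    rw [moorePenrose_mul_eq hM hQMQ hQM, ← Matrix.mul_assoc, hMQM]
  rw [← Matrix.mul_assoc, inner_frobeniusVec_mul_right, hMQ, hfix]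

end Penrose

theorem norm_frobeniusVec_sq_le_re_inner_one_add_smul [Fintype l] [Fintype m] [Fintype n]
    [DecidableEq m] (H : Matrix l m 𝕜) {ρ : ℝ} (hρ : 0 ≤ ρ) (x : Matrix m n 𝕜) :
    ‖x.frobeniusVec‖ ^ 2 ≤
      RCLike.re ⟪x.frobeniusVec, ((1 + (ρ : 𝕜) • (Hᴴ * H)) * x).frobeniusVec⟫_𝕜 := by
  have h : ⟪x.frobeniusVec, ((1 + (ρ : 𝕜) • (Hᴴ * H)) * x).frobeniusVec⟫_𝕜 =
      ‖x.frobeniusVec‖ ^ 2 + ρ * ‖(H * x).frobeniusVec‖ ^ 2 := by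
    rw [Matrix.add_mul, Matrix.one_mul, Matrix.smul_mul, Matrix.mul_assoc, frobeniusVec_add,
      frobeniusVec_smul, inner_add_right, inner_smul_right, ← inner_frobeniusVec_mul_left,
      inner_self_eq_norm_sq_to_K, inner_self_eq_norm_sq_to_K]
  rw [h]
  norm_cast
  exact le_add_of_nonneg_right (by positivity)

theorem isHermitian_one_add_smul_conjTranspose_mul_self [DecidableEq m] [Fintype l]
    (H : Matrix l m 𝕜) (ρ : ℝ) : (1 + (ρ : 𝕜) • (Hᴴ * H)).IsHermitian := by
  simp [IsHermitian, conjTranspose_add, conjTranspose_smul, conjTranspose_mul]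

theorem sq_mul_norm_frobeniusVec_moorePenrose_mul_le [Fintype m] [Fintype n] [Fintype k]
    [Fintype r] [DecidableEq k] {U₁ : Matrix m k 𝕜} {V₁ : Matrix r k 𝕜}
    (hU₁ : U₁ᴴ * U₁ = 1) (hV₁ : V₁ᴴ * V₁ = 1) {σ : k → ℝ} {c : ℝ} (hc : 0 ≤ c)
    (hσ : ∀ i, c ≤ σ i) {X : Matrix m r 𝕜} (hX : X = U₁ * diagonal (fun i => (σ i : 𝕜)) * V₁ᴴ)
    {A : Matrix m m 𝕜} (hA : A.IsHermitian)
    (hA_ge_one : ∀ x : Matrix m n 𝕜, ‖x.frobeniusVec‖ ^ 2 ≤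
      RCLike.re ⟪x.frobeniusVec, (A * x).frobeniusVec⟫_𝕜)
    {M Q : Matrix r r 𝕜} (hM : M = Xᴴ * A * X) (hMQM : M * Q * M = M)
    (hQMQ : Q * M * Q = Q) (hMQ : (M * Q)ᴴ = M * Q) (hQM : (Q * M)ᴴ = Q * M)
    (G : Matrix r n 𝕜) :
    c ^ 2 * ‖(Q * G).frobeniusVec‖ ≤ ‖(V₁ᴴ * G).frobeniusVec‖ := by
  have hM_herm : Mᴴ = M := by
    rw [hM, conjTranspose_mul, conjTranspose_mul, hA.eq, conjTranspose_conjTranspose,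
      Matrix.mul_assoc]
  have h_inner := inner_frobeniusVec_moorePenrose_mul hM_herm hMQM hQMQ hMQ hQM G
  have hu_mem_range := moorePenrose_mul_eq hM_herm hQMQ hQM G
  generalize Q * G = u at h_inner hu_mem_range ⊢
  have hu_range : V₁ * (V₁ᴴ * u) = u := by
    rw [hu_mem_range, hM]
    simp only [← Matrix.mul_assoc]
    rw [hX, mul_conjTranspose_mul_conjTranspose_svd U₁ V₁ σ hV₁]
  have hu_norm : ‖(V₁ᴴ * u).frobeniusVec‖ = ‖u.frobeniusVec‖ := by
    conv_rhs => rw [← hu_range]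
    exact (norm_frobeniusVec_mul_of_conjTranspose_mul_self_eq_one hV₁ (V₁ᴴ * u)).symm
  have h_lower : (c * ‖u.frobeniusVec‖) ^ 2 ≤
      RCLike.re ⟪u.frobeniusVec, (M * u).frobeniusVec⟫_𝕜 := by
    calc (c * ‖u.frobeniusVec‖) ^ 2 ≤ ‖(X * u).frobeniusVec‖ ^ 2 := by
          rw [← hu_norm, hX]
          gcongr
          exact mul_norm_frobeniusVec_le_svd_mul U₁ V₁ σ hU₁ hc hσ u
      _ ≤ RCLike.re ⟪(X * u).frobeniusVec, (A * (X * u)).frobeniusVec⟫_𝕜 := hA_ge_one _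
      _ = RCLike.re ⟪u.frobeniusVec, (M * u).frobeniusVec⟫_𝕜 := by
          rw [inner_frobeniusVec_mul_left, hM, Matrix.mul_assoc, Matrix.mul_assoc]
  have h_upper : RCLike.re ⟪u.frobeniusVec, (M * u).frobeniusVec⟫_𝕜 ≤
      ‖u.frobeniusVec‖ * ‖(V₁ᴴ * G).frobeniusVec‖ := by
    rw [h_inner]
    nth_rewrite 1 [← hu_range]
    rw [inner_frobeniusVec_mul_left, ← hu_norm]
    exact re_inner_le_norm _ _
  rcases (norm_nonneg u.frobeniusVec).eq_or_lt with hu | hu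
  · rw [← hu, mul_zero]
    exact norm_nonneg _
  · refine le_of_mul_le_mul_right ?_ hu
    calc c ^ 2 * ‖u.frobeniusVec‖ * ‖u.frobeniusVec‖ = (c * ‖u.frobeniusVec‖) ^ 2 := by ring
      _ ≤ ‖u.frobeniusVec‖ * ‖(V₁ᴴ * G).frobeniusVec‖ := h_lower.trans h_upper
      _ = ‖(V₁ᴴ * G).frobeniusVec‖ * ‖u.frobeniusVec‖ := mul_comm _ _

end Matrix

theorem HtH_eq_conjTranspose_mul_self (m : ℕ) :
    HtH m = ((toeplitzD m).map Complex.ofReal)ᴴ * (toeplitzD m).map Complex.ofReal := by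
  ext i j
  simp [HtH, Matrix.mul_apply]

theorem frobSqC_eq_norm_frobeniusVec_sq {a b : ℕ} (M : Matrix (Fin a) (Fin b) ℂ) :
    frobSqC M = ‖M.frobeniusVec‖ ^ 2 :=
  (M.norm_frobeniusVec_sq).symm

theorem direction_Y_norm_bound (m1 m2 r s : ℕ)
    (hs : 0 < s)
    (ρ1 : ℝ) (hρ1 : 0 ≤ ρ1)
    (X : Matrix (Fin m1) (Fin r) ℂ)
    (G : Matrix (Fin r) (Fin m2) ℂ)
    (U : Matrix (Fin m1) (Fin m1) ℂ) (V : Matrix (Fin r) (Fin r) ℂ)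
    (hU2 : Uᴴ * U = 1)
    (hV2 : Vᴴ * V = 1)
    (hsm : s ≤ m1) (hsr : s ≤ r)
    (σ : Fin s → ℝ) (hσpos : ∀ i, 0 < σ i)
    (hσanti : ∀ i j : Fin s, i ≤ j → σ j ≤ σ i)
    (hX : X = U * (Matrix.of fun (i : Fin m1) (j : Fin r) =>
        if h : (i : ℕ) = (j : ℕ) ∧ (i : ℕ) < s then (σ ⟨(i : ℕ), h.2⟩ : ℂ) else 0) * Vᴴ)
    (Q : Matrix (Fin r) (Fin r) ℂ)
    (M : Matrix (Fin r) (Fin r) ℂ)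
    (hM : M = Xᴴ * ((1 : Matrix (Fin m1) (Fin m1) ℂ) + (ρ1 : ℂ) • HtH m1) * X)
    (hQ1 : M * Q * M = M) (hQ2 : Q * M * Q = Q)
    (hQ3 : (M * Q)ᴴ = M * Q) (hQ4 : (Q * M)ᴴ = Q * M)
    (d : Matrix (Fin r) (Fin m2) ℂ)
    (hd : d = -(Q * G)) :
    frobSqC d ≤
      (1 / σ ⟨s - 1, by omega⟩ ^ 4) *
        frobSqC ((V.submatrix id (Fin.castLE hsr))ᴴ * G) := by
  have hσ_min : ∀ i, σ ⟨s - 1, by omega⟩ ≤ σ i := fun i =>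
    hσanti i _ (Nat.le_sub_one_of_lt i.isLt)
  have hX_svd := hX.trans (mul_rectDiagonal_mul_conjTranspose hsm hsr σ U V)
  have key := sq_mul_norm_frobeniusVec_moorePenrose_mul_le
    (conjTranspose_mul_submatrix_id_eq_one hU2 (Fin.castLE_injective hsm))
    (conjTranspose_mul_submatrix_id_eq_one hV2 (Fin.castLE_injective hsr))
    (hσpos _).le hσ_min hX_svd
    (isHermitian_one_add_smul_conjTranspose_mul_self ((toeplitzD m1).map Complex.ofReal) ρ1)
    (norm_frobeniusVec_sq_le_re_inner_one_add_smul _ hρ1)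
    (by rw [hM, HtH_eq_conjTranspose_mul_self]; rfl) hQ1 hQ2 hQ3 hQ4 G
  have hσ_pos := hσpos ⟨s - 1, by omega⟩
  rw [hd, frobSqC_eq_norm_frobeniusVec_sq, frobSqC_eq_norm_frobeniusVec_sq, frobeniusVec_neg,
    norm_neg, one_div_mul_eq_div, le_div_iff₀ (by positivity)]
  calc ‖(Q * G).frobeniusVec‖ ^ 2 * σ ⟨s - 1, _⟩ ^ 4
      = (σ ⟨s - 1, _⟩ ^ 2 * ‖(Q * G).frobeniusVec‖) ^ 2 := by ring
    _ ≤ ‖((V.submatrix id (Fin.castLE hsr))ᴴ * G).frobeniusVec‖ ^ 2 := by gcongr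
end
end
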